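/- For every two-counter machine M = (Q,q_s,q_f,Delta) there exist a finite set Locks with exactly 8 elements, a 2-PDS CP=(P_1,P_2) communicating via reentrant Locks in which both P_1 and P_2 have empty stack alphabet (hence both threads trivially follow contextual reentrant locking and never use their stacks), and control states q_f' of P_1 and q_* of P_2, such that M halts if and only if Reach(CP, q_f', q_*) holds. -/

import Mathlib

/-- Transition labels of a pushdown system using locks. -/
inductive Label (L : Type) : Type where
  | state : Label L
  | push : Label L
  | pop : Label L
  | acq : L → Label L
  | rel : L → Label L

/-- A pushdown system (PDS) using the set of reentrant locks `L`, with control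
states `Q` and stack alphabet `Γ`. -/
structure PDS (Q Γ L : Type) where
  start : Q
  stateTr : Set (Q × Q)
  pushTr : Set (Q × (Q × Γ))
  popTr : Set ((Q × Γ) × Q)
  acqTr : Set (Q × (Q × L))
  relTr : Set ((Q × L) × Q)

/-- A local configuration of one thread using reentrant locks: control state, stack,
and a function counting how many times each lock is held. -/
abbrev RConf (Q Γ L : Type) : Type := Q × List Γ × (L → ℕ)

/-- One labelled step of a single thread using reentrant locks, in an environment
where the locks in `free` are free (held by no thread): an acquisition of `l`
requires `l` to be free or already held by the thread and increments the count;
a release requires a positive count and decrements it. -/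
def PDS.RStep {Q Γ L : Type} [DecidableEq L] (P : PDS Q Γ L) (free : Set L)
    (c : RConf Q Γ L) : Label L → RConf Q Γ L → Prop
  | .state, c' => (c.1, c'.1) ∈ P.stateTr ∧ c'.2.1 = c.2.1 ∧ c'.2.2 = c.2.2
  | .push, c' => ∃ a, (c.1, (c'.1, a)) ∈ P.pushTr ∧ c'.2.1 = c.2.1 ++ [a] ∧ c'.2.2 = c.2.2
  | .pop, c' => ∃ a, ((c.1, a), c'.1) ∈ P.popTr ∧ c.2.1 = c'.2.1 ++ [a] ∧ c'.2.2 = c.2.2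
  | .acq l, c' => (c.1, (c'.1, l)) ∈ P.acqTr ∧ (l ∈ free ∨ 0 < c.2.2 l) ∧
      c'.2.1 = c.2.1 ∧ c'.2.2 = Function.update c.2.2 l (c.2.2 l + 1)
  | .rel l, c' => ((c.1, l), c'.1) ∈ P.relTr ∧ 0 < c.2.2 l ∧
      c'.2.1 = c.2.1 ∧ c'.2.2 = Function.update c.2.2 l (c.2.2 l - 1)

/-- A 2-PDS communicating via reentrant locks `L`. -/
structure TwoPDS (Q₀ Γ₀ Q₁ Γ₁ L : Type) where
  P0 : PDS Q₀ Γ₀ L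
  P1 : PDS Q₁ Γ₁ L

namespace TwoPDS

variable {Q₀ Γ₀ Q₁ Γ₁ L : Type} [DecidableEq L]

/-- A configuration of a 2-PDS communicating via reentrant locks. -/
abbrev RConf2 (Q₀ Γ₀ Q₁ Γ₁ L : Type) : Type := RConf Q₀ Γ₀ L × RConf Q₁ Γ₁ L

/-- The locks that are free, i.e. held zero times by both threads. -/
def rfreeLocks (s : RConf2 Q₀ Γ₀ Q₁ Γ₁ L) : Set L :=
  {l | s.1.2.2 l = 0 ∧ s.2.2.2 l = 0}

/-- The labelled transition relation of a 2-PDS communicating via reentrant locks. -/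
def RStep (CP : TwoPDS Q₀ Γ₀ Q₁ Γ₁ L) (s : RConf2 Q₀ Γ₀ Q₁ Γ₁ L)
    (lab : Label L × Fin 2) (t : RConf2 Q₀ Γ₀ Q₁ Γ₁ L) : Prop :=
  (lab.2 = 0 ∧ CP.P0.RStep (rfreeLocks s) s.1 lab.1 t.1 ∧ t.2 = s.2) ∨
  (lab.2 = 1 ∧ CP.P1.RStep (rfreeLocks s) s.2 lab.1 t.2 ∧ t.1 = s.1)

/-- The initial configuration: both threads have empty stacks and hold no locks. -/
def rinitConf (CP : TwoPDS Q₀ Γ₀ Q₁ Γ₁ L) : RConf2 Q₀ Γ₀ Q₁ Γ₁ L :=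
  ((CP.P0.start, [], fun _ => 0), (CP.P1.start, [], fun _ => 0))

/-- A (finite) computation of a 2-PDS communicating via reentrant locks. -/
structure RComp (CP : TwoPDS Q₀ Γ₀ Q₁ Γ₁ L) where
  len : ℕ
  s : ℕ → RConf2 Q₀ Γ₀ Q₁ Γ₁ L
  lab : ℕ → Label L × Fin 2
  init : s 0 = CP.rinitConf
  step : ∀ k < len, CP.RStep (s k) (lab k) (s (k + 1))

variable {CP : TwoPDS Q₀ Γ₀ Q₁ Γ₁ L}

/-- Height of the stack of thread `i` in the `k`-th configuration. -/
def RComp.height (c : RComp CP) (i : Fin 2) (k : ℕ) : ℕ :=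
  if i = 0 then (c.s k).1.2.1.length else (c.s k).2.2.1.length

/-- The lock-count function of thread `i` in the `k`-th configuration. -/
def RComp.held (c : RComp CP) (i : Fin 2) (k : ℕ) : L → ℕ :=
  if i = 0 then (c.s k).1.2.2 else (c.s k).2.2.2

/-- The procedure return of thread `i` at position `j` matches the procedure call of
thread `i` at position `l`. -/
def RComp.Matching (c : RComp CP) (i : Fin 2) (l j : ℕ) : Prop :=
  l < j ∧ j < c.len ∧ c.lab l = (Label.push, i) ∧ c.lab j = (Label.pop, i) ∧
    c.height i l = c.height i (j + 1) ∧
    ∀ p, l + 1 ≤ p → p ≤ j → c.height i (l + 1) ≤ c.height i p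

/-- Thread `i` of the 2-PDS follows contextual (reentrant) locking. -/
def RContextual (CP : TwoPDS Q₀ Γ₀ Q₁ Γ₁ L) (i : Fin 2) : Prop :=
  ∀ c : RComp CP, ∀ l j, c.Matching i l j →
    c.held i l = c.held i (j + 1) ∧
    ∀ l' r, l ≤ r → r ≤ j → c.held i l l' ≤ c.held i r l'

/-- `RReach CP p q`: some computation of `CP` ends in a configuration whose control
states are `p` and `q`. -/
def RReach (CP : TwoPDS Q₀ Γ₀ Q₁ Γ₁ L) (p : Q₀) (q : Q₁) : Prop :=
  ∃ c : RComp CP, (c.s c.len).1.1 = p ∧ (c.s c.len).2.1 = q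

end TwoPDS

/-- A two-counter machine `M = (Q, q_s, q_f, Δ)` with state transitions, increment,
decrement, and zero-test transitions for each of the two counters. -/
structure TCM (Q : Type) where
  start : Q
  final : Q
  stateTr : Set (Q × Q)
  incTr1 : Set (Q × Q)
  incTr2 : Set (Q × Q)
  decTr1 : Set (Q × Q)
  decTr2 : Set (Q × Q)
  zTr1 : Set (Q × Q)
  zTr2 : Set (Q × Q)

/-- One step of a two-counter machine on configurations `(q, c₁, c₂)`. -/
def TCM.Step {Q : Type} (M : TCM Q) (x y : Q × ℕ × ℕ) : Prop :=
  ((x.1, y.1) ∈ M.stateTr ∧ y.2.1 = x.2.1 ∧ y.2.2 = x.2.2) ∨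
  ((x.1, y.1) ∈ M.incTr1 ∧ y.2.1 = x.2.1 + 1 ∧ y.2.2 = x.2.2) ∨
  ((x.1, y.1) ∈ M.incTr2 ∧ y.2.1 = x.2.1 ∧ y.2.2 = x.2.2 + 1) ∨
  ((x.1, y.1) ∈ M.decTr1 ∧ x.2.1 = y.2.1 + 1 ∧ y.2.2 = x.2.2) ∨
  ((x.1, y.1) ∈ M.decTr2 ∧ y.2.1 = x.2.1 ∧ x.2.2 = y.2.2 + 1) ∨
  ((x.1, y.1) ∈ M.zTr1 ∧ x.2.1 = 0 ∧ y.2.1 = 0 ∧ y.2.2 = x.2.2) ∨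
  ((x.1, y.1) ∈ M.zTr2 ∧ x.2.2 = 0 ∧ y.2.1 = x.2.1 ∧ y.2.2 = 0)

/-- A two-counter machine halts if from `(q_s, 0, 0)` it can reach a configuration
whose state is `q_f`. -/
def TCM.Halts {Q : Type} (M : TCM Q) : Prop :=
  ∃ x : Q × ℕ × ℕ, Relation.ReflTransGen M.Step (M.start, 0, 0) x ∧ x.1 = M.final


/-!
Thread 0 simulates `M`, holding the lock `counter i` exactly `cᵢ` times: increments and
decrements are reentrant acquisitions and releases. A zero test needs the other thread: thread 0
releases `request i`; thread 1 takes it, checks that `counter i` is free by acquiring and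
releasing it, and only then releases `grant i`, which thread 0 acquires and returns. Thread 1
takes `grant i` back before it returns `request i`, so no later zero test can skip the check.
Thread 1 must hold both grant locks before thread 0 starts; the gate enforces this, because if
thread 0 takes the gate first, thread 1 is stuck forever and never becomes idle. The eighth lock
is never used.

In every reachable configuration the lock counts are determined by the two control states and
the counter values, and on such configurations the lock system steps exactly like an abstract
protocol on (control states, counters). Soundness is an inductive invariant of that protocol:
every configuration of `M` that thread 0 simulates is reachable in `M`.
-/

open Relation Function

theorem Relation.reflTransGen_map_iff {α β : Type*} {r : α → α → Prop} {s : β → β → Prop}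
    {f : α → β} (hmap : ∀ {x y}, r x y → s (f x) (f y))
    (hlift : ∀ {x t}, s (f x) t → ∃ y, f y = t ∧ r x y) {a : α} {t : β} :
    ReflTransGen s (f a) t ↔ ∃ y, ReflTransGen r a y ∧ f y = t := by
  constructor
  · intro h
    induction h with
    | refl => exact ⟨a, .refl, rfl⟩
    | tail _ hst ih =>
      obtain ⟨y, hy, rfl⟩ := ih
      obtain ⟨z, rfl, hz⟩ := hlift hst
      exact ⟨z, hy.tail hz, rfl⟩
  · rintro ⟨y, hy, rfl⟩
    exact hy.lift f fun _ _ => hmap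

namespace TwoPDS

variable {Q₀ Γ₀ Q₁ Γ₁ L : Type} [DecidableEq L] {CP : TwoPDS Q₀ Γ₀ Q₁ Γ₁ L}

variable (CP) in
def Move (s t : RConf2 Q₀ Γ₀ Q₁ Γ₁ L) : Prop :=
  ∃ lab, CP.RStep s lab t

def RComp.snoc (c : CP.RComp) {lab : Label L × Fin 2} {t : RConf2 Q₀ Γ₀ Q₁ Γ₁ L}
    (h : CP.RStep (c.s c.len) lab t) : CP.RComp where
  len := c.len + 1
  s k := if k ≤ c.len then c.s k else t
  lab k := if k = c.len then lab else c.lab k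
  init := by simp [c.init]
  step k hk := by
    rcases Nat.lt_succ_iff_lt_or_eq.mp hk with hk | rfl
    · simpa [hk.le, Nat.succ_le_of_lt hk, hk.ne] using c.step k hk
    · simpa using h

theorem exists_rcomp_iff {t : RConf2 Q₀ Γ₀ Q₁ Γ₁ L} :
    (∃ c : CP.RComp, c.s c.len = t) ↔ ReflTransGen CP.Move CP.rinitConf t := by
  constructor
  · rintro ⟨c, rfl⟩
    suffices ∀ k ≤ c.len, ReflTransGen CP.Move CP.rinitConf (c.s k) from this _ le_rfl
    intro k hk
    induction k with
    | zero => rw [c.init]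
    | succ k ih => exact (ih (by omega)).tail ⟨_, c.step k (by omega)⟩
  · intro h
    induction h with
    | refl => exact ⟨⟨0, fun _ => CP.rinitConf, fun _ => (.state, 0), rfl, by simp⟩, rfl⟩
    | tail _ hst ih =>
      obtain ⟨c, rfl⟩ := ih
      obtain ⟨lab, hst⟩ := hst
      exact ⟨c.snoc hst, by simp [RComp.snoc]⟩

theorem rreach_iff_reflTransGen {p : Q₀} {q : Q₁} :
    CP.RReach p q ↔ ∃ t, ReflTransGen CP.Move CP.rinitConf t ∧ t.1.1 = p ∧ t.2.1 = q := by
  simp only [RReach, ← exists_rcomp_iff]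
  exact ⟨fun ⟨c, h⟩ => ⟨_, ⟨c, rfl⟩, h⟩, fun ⟨_, ⟨c, hc⟩, h⟩ => ⟨c, hc ▸ h⟩⟩

variable (CP) in
theorem rcontextual_of_isEmpty [IsEmpty Γ₀] [IsEmpty Γ₁] (i : Fin 2) : CP.RContextual i := by
  rintro c l j ⟨hlj, hj, hpush, -⟩
  have hstep := c.step l (hlj.trans hj)
  rw [hpush] at hstep
  rcases hstep with ⟨-, ⟨a, -⟩, -⟩ | ⟨-, ⟨a, -⟩, -⟩ <;> exact isEmptyElim a

end TwoPDS

namespace TCM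

def count : Bool → ℕ × ℕ → ℕ
  | true, n => n.1
  | false, n => n.2

def bump : Bool → ℕ × ℕ → ℕ × ℕ
  | true, n => (n.1 + 1, n.2)
  | false, n => (n.1, n.2 + 1)

theorem count_bump (i : Bool) (n : ℕ × ℕ) : count i (bump i n) = count i n + 1 := by
  cases i <;> rfl

theorem exists_bump_of_pos {i : Bool} {n : ℕ × ℕ} (h : 0 < count i n) :
    ∃ m, n = bump i m := by
  obtain ⟨a, b⟩ := n
  cases i
  · exact ⟨(a, b - 1), by simp only [count] at h; simp [bump]; omega⟩
  · exact ⟨(a - 1, b), by simp only [count] at h; simp [bump]; omega⟩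

variable {Q : Type} (M : TCM Q)

def incTr (i : Bool) : Set (Q × Q) := cond i M.incTr1 M.incTr2

def decTr (i : Bool) : Set (Q × Q) := cond i M.decTr1 M.decTr2

def zTr (i : Bool) : Set (Q × Q) := cond i M.zTr1 M.zTr2

theorem step_iff {x y : Q × ℕ × ℕ} : M.Step x y ↔
    ((x.1, y.1) ∈ M.stateTr ∧ y.2 = x.2) ∨
    (∃ i, (x.1, y.1) ∈ M.incTr i ∧ y.2 = bump i x.2) ∨
    (∃ i, (x.1, y.1) ∈ M.decTr i ∧ x.2 = bump i y.2) ∨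
    (∃ i, (x.1, y.1) ∈ M.zTr i ∧ count i x.2 = 0 ∧ y.2 = x.2) := by
  obtain ⟨q, a, b⟩ := x
  obtain ⟨q', a', b'⟩ := y
  simp only [Step, Bool.exists_bool, incTr, decTr, zTr, bump, count, cond, Prod.mk.injEq]
  constructor
  · rintro (⟨h, rfl, rfl⟩ | ⟨h, rfl, rfl⟩ | ⟨h, rfl, rfl⟩ | ⟨h, rfl, rfl⟩ | ⟨h, rfl, rfl⟩ |
      ⟨h, rfl, rfl, rfl⟩ | ⟨h, rfl, rfl, rfl⟩) <;> simp [h]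
  · rintro (⟨h, rfl, rfl⟩ | (⟨h, rfl, rfl⟩ | ⟨h, rfl, rfl⟩) | (⟨h, rfl, rfl⟩ | ⟨h, rfl, rfl⟩) |
      (⟨h, rfl, rfl, rfl⟩ | ⟨h, rfl, rfl, rfl⟩)) <;> simp [h]

def Reaches (q : Q) (n : ℕ × ℕ) : Prop :=
  ReflTransGen M.Step (M.start, 0, 0) (q, n)

variable {M} {q q' : Q} {n : ℕ × ℕ} {i : Bool}

theorem Reaches.internal (h : M.Reaches q n) (hq : (q, q') ∈ M.stateTr) : M.Reaches q' n :=
  h.tail (M.step_iff.2 (.inl ⟨hq, rfl⟩))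

theorem Reaches.inc (h : M.Reaches q n) (hq : (q, q') ∈ M.incTr i) :
    M.Reaches q' (bump i n) :=
  h.tail (M.step_iff.2 (.inr (.inl ⟨i, hq, rfl⟩)))

theorem Reaches.dec (h : M.Reaches q (bump i n)) (hq : (q, q') ∈ M.decTr i) :
    M.Reaches q' n :=
  h.tail (M.step_iff.2 (.inr (.inr (.inl ⟨i, hq, rfl⟩))))

theorem Reaches.zero (h : M.Reaches q n) (hq : (q, q') ∈ M.zTr i) (h0 : count i n = 0) :
    M.Reaches q' n :=
  h.tail (M.step_iff.2 (.inr (.inr (.inr ⟨i, hq, h0, rfl⟩))))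

end TCM

namespace LockReduction

open TCM

inductive Lock
  | counter (i : Bool)
  | request (i : Bool)
  | grant (i : Bool)
  | gate
  | spare
  deriving DecidableEq, Fintype

inductive SimState (Q : Type)
  | boot0
  | boot1
  | boot2
  | run (q : Q)
  | asking (i : Bool) (q : Q)
  | granted (i : Bool) (q : Q)
  | resuming (i : Bool) (q : Q)
  deriving Fintype

inductive Phase
  | claimed
  | testing
  | tested
  | granting
  | reclaimed
  deriving DecidableEq

instance : Fintype Phase :=
  ⟨{.claimed, .testing, .tested, .granting, .reclaimed}, by intro k; cases k <;> simp⟩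

inductive CheckState
  | boot0
  | boot1
  | boot2
  | boot3
  | idle
  | serve (i : Bool) (k : Phase)
  deriving Fintype

variable {Q : Type} (M : TCM Q)

inductive SimAcq : SimState Q → SimState Q → Lock → Prop
  | gate : SimAcq .boot0 .boot1 .gate
  | request : SimAcq .boot1 .boot2 (.request true)
  | start : SimAcq .boot2 (.run M.start) (.request false)
  | inc {i q q'} : (q, q') ∈ M.incTr i → SimAcq (.run q) (.run q') (.counter i)
  | grant {i q} : SimAcq (.asking i q) (.granted i q) (.grant i)
  | resume {i q} : SimAcq (.resuming i q) (.run q) (.request i)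

inductive SimRel : SimState Q → Lock → SimState Q → Prop
  | dec {i q q'} : (q, q') ∈ M.decTr i → SimRel (.run q) (.counter i) (.run q')
  | ask {i q q'} : (q, q') ∈ M.zTr i → SimRel (.run q) (.request i) (.asking i q')
  | grant {i q} : SimRel (.granted i q) (.grant i) (.resuming i q)

inductive CheckAcq : CheckState → CheckState → Lock → Prop
  | gate : CheckAcq .boot0 .boot1 .gate
  | grant₁ : CheckAcq .boot1 .boot2 (.grant true)
  | grant₂ : CheckAcq .boot2 .boot3 (.grant false)
  | claim {i} : CheckAcq .idle (.serve i .claimed) (.request i)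
  | test {i} : CheckAcq (.serve i .claimed) (.serve i .testing) (.counter i)
  | reclaim {i} : CheckAcq (.serve i .granting) (.serve i .reclaimed) (.grant i)

inductive CheckRel : CheckState → Lock → CheckState → Prop
  | gate : CheckRel .boot3 .gate .idle
  | untest {i} : CheckRel (.serve i .testing) (.counter i) (.serve i .tested)
  | grant {i} : CheckRel (.serve i .tested) (.grant i) (.serve i .granting)
  | release {i} : CheckRel (.serve i .reclaimed) (.request i) .idle

def simPDS : PDS (SimState Q) Empty Lock where
  start := .boot0
  stateTr := Prod.map .run .run '' M.stateTr
  pushTr := ∅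
  popTr := ∅
  acqTr := {x | SimAcq M x.1 x.2.1 x.2.2}
  relTr := {x | SimRel M x.1.1 x.1.2 x.2}

def checkPDS : PDS CheckState Empty Lock where
  start := .boot0
  stateTr := ∅
  pushTr := ∅
  popTr := ∅
  acqTr := {x | CheckAcq x.1 x.2.1 x.2.2}
  relTr := {x | CheckRel x.1.1 x.1.2 x.2}

def system : TwoPDS (SimState Q) Empty CheckState Empty Lock := ⟨simPDS M, checkPDS⟩

def runLocks (n : ℕ × ℕ) : Lock → ℕ
  | .counter i => count i n
  | .request _ => 1
  | .gate => 1
  | _ => 0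

def simLocks : SimState Q → ℕ × ℕ → Lock → ℕ
  | .boot0, _ => 0
  | .boot1, _ => update 0 .gate 1
  | .boot2, _ => update (update 0 .gate 1) (.request true) 1
  | .run _, n => runLocks n
  | .asking i _, n | .resuming i _, n => update (runLocks n) (.request i) 0
  | .granted i _, n => update (update (runLocks n) (.request i) 0) (.grant i) 1

def idleLocks : Lock → ℕ
  | .grant _ => 1
  | _ => 0

def checkLocks : CheckState → Lock → ℕ
  | .boot0 => 0
  | .boot1 => update 0 .gate 1
  | .boot2 => update (update 0 .gate 1) (.grant true) 1
  | .boot3 => update idleLocks .gate 1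
  | .idle => idleLocks
  | .serve i .testing => update (update idleLocks (.request i) 1) (.counter i) 1
  | .serve i .granting => update (update idleLocks (.request i) 1) (.grant i) 0
  | .serve i _ => update idleLocks (.request i) 1

@[simp] theorem checkLocks_serve_request (i j : Bool) (k : Phase) :
    checkLocks (.serve i k) (.request j) = if j = i then 1 else 0 := by
  cases k <;> by_cases j = i <;> simp_all [checkLocks, idleLocks]

@[simp] theorem checkLocks_serve_grant (i j : Bool) (k : Phase) :
    checkLocks (.serve i k) (.grant j) = if j = i ∧ k = .granting then 0 else 1 := by
  cases k <;> by_cases j = i <;> simp_all [checkLocks, idleLocks]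

/-- `cnt` holds the counter values of `M`; it is meaningless while thread 0 is booting. -/
structure Conf (Q : Type) where
  sim : SimState Q
  cnt : ℕ × ℕ
  chk : CheckState

def Conf.toRConf (x : Conf Q) : TwoPDS.RConf2 (SimState Q) Empty CheckState Empty Lock :=
  ((x.sim, [], simLocks x.sim x.cnt), (x.chk, [], checkLocks x.chk))

def Conf.init : Conf Q := ⟨.boot0, (0, 0), .boot0⟩

def Conf.running (x : Q × ℕ × ℕ) : Conf Q := ⟨.run x.1, x.2, .idle⟩

inductive Step : Conf Q → Conf Q → Prop
  | takeGate {n r} : checkLocks r .gate = 0 → Step ⟨.boot0, n, r⟩ ⟨.boot1, n, r⟩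
  | takeRequest {n r} : checkLocks r (.request true) = 0 →
      Step ⟨.boot1, n, r⟩ ⟨.boot2, n, r⟩
  | start {n r} : checkLocks r (.request false) = 0 →
      Step ⟨.boot2, n, r⟩ ⟨.run M.start, (0, 0), r⟩
  | internal {q q' n r} : (q, q') ∈ M.stateTr → Step ⟨.run q, n, r⟩ ⟨.run q', n, r⟩
  | inc {i q q' n r} : (q, q') ∈ M.incTr i → (count i n = 0 → checkLocks r (.counter i) = 0) →
      Step ⟨.run q, n, r⟩ ⟨.run q', bump i n, r⟩
  | dec {i q q' n r} : (q, q') ∈ M.decTr i → Step ⟨.run q, bump i n, r⟩ ⟨.run q', n, r⟩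
  | ask {i q q' n r} : (q, q') ∈ M.zTr i → Step ⟨.run q, n, r⟩ ⟨.asking i q', n, r⟩
  | takeGrant {i q n r} : checkLocks r (.grant i) = 0 →
      Step ⟨.asking i q, n, r⟩ ⟨.granted i q, n, r⟩
  | returnGrant {i q n r} : Step ⟨.granted i q, n, r⟩ ⟨.resuming i q, n, r⟩
  | resume {i q n r} : checkLocks r (.request i) = 0 →
      Step ⟨.resuming i q, n, r⟩ ⟨.run q, n, r⟩
  | closeGate {s n} : simLocks s n .gate = 0 → Step ⟨s, n, .boot0⟩ ⟨s, n, .boot1⟩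
  | collectGrant₁ {s n} : simLocks s n (.grant true) = 0 → Step ⟨s, n, .boot1⟩ ⟨s, n, .boot2⟩
  | collectGrant₂ {s n} : simLocks s n (.grant false) = 0 →
      Step ⟨s, n, .boot2⟩ ⟨s, n, .boot3⟩
  | openGate {s n} : Step ⟨s, n, .boot3⟩ ⟨s, n, .idle⟩
  | claim {i s n} : simLocks s n (.request i) = 0 →
      Step ⟨s, n, .idle⟩ ⟨s, n, .serve i .claimed⟩
  | test {i s n} : simLocks s n (.counter i) = 0 →
      Step ⟨s, n, .serve i .claimed⟩ ⟨s, n, .serve i .testing⟩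
  | untest {i s n} : Step ⟨s, n, .serve i .testing⟩ ⟨s, n, .serve i .tested⟩
  | grant {i s n} : Step ⟨s, n, .serve i .tested⟩ ⟨s, n, .serve i .granting⟩
  | reclaim {i s n} : simLocks s n (.grant i) = 0 →
      Step ⟨s, n, .serve i .granting⟩ ⟨s, n, .serve i .reclaimed⟩
  | release {i s n} : Step ⟨s, n, .serve i .reclaimed⟩ ⟨s, n, .idle⟩

inductive Invariant : Conf Q → Prop
  /-- Once thread 0 holds the gate, thread 1 never leaves `boot0`. -/
  | checkerBoot0 {s n} : Invariant ⟨s, n, .boot0⟩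
  | checkerBoot1 {n} : Invariant ⟨.boot0, n, .boot1⟩
  | checkerBoot2 {n} : Invariant ⟨.boot0, n, .boot2⟩
  | checkerBoot3 {n} : Invariant ⟨.boot0, n, .boot3⟩
  | idleBoot0 {n} : Invariant ⟨.boot0, n, .idle⟩
  | idleBoot1 {n} : Invariant ⟨.boot1, n, .idle⟩
  | idleBoot2 {n} : Invariant ⟨.boot2, n, .idle⟩
  | idleRun {q n} : M.Reaches q n → Invariant ⟨.run q, n, .idle⟩
  | idleAsking {i q n} : (count i n = 0 → M.Reaches q n) → Invariant ⟨.asking i q, n, .idle⟩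
  | idleResuming {i q n} : M.Reaches q n → Invariant ⟨.resuming i q, n, .idle⟩
  | serveBoot0 {i k n} : Invariant ⟨.boot0, n, .serve i k⟩
  | serveBoot1 {i k n} : Invariant ⟨.boot1, n, .serve i k⟩
  | serveBoot2 {k n} : Invariant ⟨.boot2, n, .serve false k⟩
  | claimedAsking {i q n} : (count i n = 0 → M.Reaches q n) →
      Invariant ⟨.asking i q, n, .serve i .claimed⟩
  | checkedAsking {i k q n} : k ≠ .claimed → M.Reaches q n →
      Invariant ⟨.asking i q, n, .serve i k⟩
  | grantingGranted {i q n} : M.Reaches q n → Invariant ⟨.granted i q, n, .serve i .granting⟩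
  | serveResuming {i k q n} : M.Reaches q n → Invariant ⟨.resuming i q, n, .serve i k⟩

theorem runLocks_bump (i : Bool) (n : ℕ × ℕ) :
    runLocks (bump i n) = update (runLocks n) (.counter i) (count i n + 1) := by
  funext l
  cases l <;> cases i <;> simp [runLocks, bump, count, update_apply] <;> split_ifs <;> simp_all

theorem update_simLocks_boot2 (n : ℕ × ℕ) :
    update (simLocks (Q := Q) .boot2 n) (.request false)
      (simLocks (Q := Q) .boot2 n (.request false) + 1) = simLocks (.run M.start) (0, 0) := by
  funext l
  rcases l with (_ | _) | (_ | _) | (_ | _) | _ | _ <;> simp [simLocks, runLocks, count]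

theorem update_checkLocks_boot2 :
    update (checkLocks .boot2) (.grant false) (checkLocks .boot2 (.grant false) + 1) =
      checkLocks .boot3 := by
  funext l
  rcases l with (_ | _) | (_ | _) | (_ | _) | _ | _ <;> simp [checkLocks, idleLocks]

variable {M}

theorem simAvail_iff {x : Conf Q} {l : Lock} :
    l ∈ TwoPDS.rfreeLocks x.toRConf ∨ 0 < simLocks x.sim x.cnt l ↔
      (simLocks x.sim x.cnt l = 0 → checkLocks x.chk l = 0) := by
  simp only [TwoPDS.rfreeLocks, Conf.toRConf, Set.mem_ofPred_eq]
  omega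

theorem checkAvail_iff {x : Conf Q} {l : Lock} :
    l ∈ TwoPDS.rfreeLocks x.toRConf ∨ 0 < checkLocks x.chk l ↔
      (checkLocks x.chk l = 0 → simLocks x.sim x.cnt l = 0) := by
  simp only [TwoPDS.rfreeLocks, Conf.toRConf, Set.mem_ofPred_eq]
  omega

theorem move_simAcq {s s' : SimState Q} {n n' : ℕ × ℕ} {r : CheckState} {l : Lock}
    (h : SimAcq M s s' l) (hfree : simLocks s n l = 0 → checkLocks r l = 0)
    (hlocks : update (simLocks s n) l (simLocks s n l + 1) = simLocks s' n') :
    (system M).Move (Conf.toRConf ⟨s, n, r⟩) (Conf.toRConf ⟨s', n', r⟩) :=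
  ⟨(.acq l, 0), .inl ⟨rfl, ⟨h, simAvail_iff.2 hfree, rfl, hlocks.symm⟩, rfl⟩⟩

theorem move_simRel {s s' : SimState Q} {n n' : ℕ × ℕ} {r : CheckState} {l : Lock}
    (h : SimRel M s l s') (hpos : 0 < simLocks s n l)
    (hlocks : update (simLocks s n) l (simLocks s n l - 1) = simLocks s' n') :
    (system M).Move (Conf.toRConf ⟨s, n, r⟩) (Conf.toRConf ⟨s', n', r⟩) :=
  ⟨(.rel l, 0), .inl ⟨rfl, ⟨h, hpos, rfl, hlocks.symm⟩, rfl⟩⟩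

theorem move_checkAcq {s : SimState Q} {n : ℕ × ℕ} {r r' : CheckState} {l : Lock}
    (h : CheckAcq r r' l) (hfree : simLocks s n l = 0)
    (hlocks : update (checkLocks r) l (checkLocks r l + 1) = checkLocks r') :
    (system M).Move (Conf.toRConf ⟨s, n, r⟩) (Conf.toRConf ⟨s, n, r'⟩) :=
  ⟨(.acq l, 1), .inr ⟨rfl, ⟨h, checkAvail_iff.2 fun _ => hfree, rfl, hlocks.symm⟩, rfl⟩⟩

theorem move_checkRel {s : SimState Q} {n : ℕ × ℕ} {r r' : CheckState} {l : Lock}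
    (h : CheckRel r l r') (hpos : 0 < checkLocks r l)
    (hlocks : update (checkLocks r) l (checkLocks r l - 1) = checkLocks r') :
    (system M).Move (Conf.toRConf ⟨s, n, r⟩) (Conf.toRConf ⟨s, n, r'⟩) :=
  ⟨(.rel l, 1), .inr ⟨rfl, ⟨h, hpos, rfl, hlocks.symm⟩, rfl⟩⟩

theorem Step.move {x y : Conf Q} (h : Step M x y) : (system M).Move x.toRConf y.toRConf := by
  cases h with
  | takeGate h => exact move_simAcq .gate (fun _ => h) (by simp [simLocks])
  | takeRequest h => exact move_simAcq .request (fun _ => h) (by simp [simLocks])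
  | start h => exact move_simAcq .start (fun _ => h) (update_simLocks_boot2 M _)
  | internal h => exact ⟨(.state, 0), .inl ⟨rfl, ⟨⟨_, h, rfl⟩, rfl, rfl⟩, rfl⟩⟩
  | inc h hfree =>
    exact move_simAcq (.inc h) hfree (by simp [simLocks, runLocks, runLocks_bump])
  | dec h =>
    refine move_simRel (.dec h) ?_ ?_ <;>
      simp [simLocks, runLocks, count_bump, runLocks_bump]
  | ask h => refine move_simRel (.ask h) ?_ ?_ <;> simp [simLocks, runLocks]
  | takeGrant h => exact move_simAcq .grant (fun _ => h) (by simp [simLocks, runLocks])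
  | returnGrant => refine move_simRel .grant ?_ ?_ <;> simp [simLocks, runLocks]
  | resume h => exact move_simAcq .resume (fun _ => h) (by simp [simLocks, runLocks])
  | closeGate h => exact move_checkAcq .gate h (by simp [checkLocks])
  | collectGrant₁ h => exact move_checkAcq .grant₁ h (by simp [checkLocks])
  | collectGrant₂ h => exact move_checkAcq .grant₂ h update_checkLocks_boot2
  | openGate => refine move_checkRel .gate ?_ ?_ <;> simp [checkLocks, idleLocks]
  | claim h => exact move_checkAcq .claim h (by simp [checkLocks, idleLocks])
  | test h => exact move_checkAcq .test h (by simp [checkLocks, idleLocks])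
  | untest => refine move_checkRel .untest ?_ ?_ <;> simp [checkLocks, idleLocks]
  | grant => refine move_checkRel .grant ?_ ?_ <;> simp [checkLocks, idleLocks]
  | reclaim h => exact move_checkAcq .reclaim h (by simp [checkLocks, idleLocks])
  | release => refine move_checkRel .release ?_ ?_ <;> simp [checkLocks, idleLocks]

theorem exists_step_of_simStep {s : SimState Q} {n : ℕ × ℕ} {r : CheckState}
    {lab : Label Lock} {u : RConf (SimState Q) Empty Lock}
    (h : (simPDS M).RStep (TwoPDS.rfreeLocks (Conf.toRConf ⟨s, n, r⟩)) (s, [], simLocks s n)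
      lab u) :
    ∃ y, y.toRConf = (u, (r, [], checkLocks r)) ∧ Step M ⟨s, n, r⟩ y := by
  obtain ⟨s', w, f⟩ := u
  cases lab with
  | state =>
    obtain ⟨⟨⟨q, q'⟩, hq, he⟩, rfl, rfl⟩ := h
    obtain ⟨rfl, rfl⟩ := Prod.mk.inj he
    exact ⟨⟨.run q', n, r⟩, rfl, .internal hq⟩
  | push | pop => obtain ⟨⟨⟩, -⟩ := h
  | acq l =>
    obtain ⟨hacq, hfree, rfl, rfl⟩ := h
    replace hfree := simAvail_iff.1 hfree
    cases hacq with
    | gate => exact ⟨_, by simp [Conf.toRConf, simLocks], .takeGate (hfree rfl)⟩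
    | request => exact ⟨_, by simp [Conf.toRConf, simLocks], .takeRequest (hfree rfl)⟩
    | start =>
      exact ⟨⟨_, (0, 0), r⟩, by rw [Conf.toRConf, update_simLocks_boot2 M n],
        .start (hfree rfl)⟩
    | inc h =>
      exact ⟨_, by simp [Conf.toRConf, simLocks, runLocks, runLocks_bump], .inc h hfree⟩
    | grant =>
      exact ⟨_, by simp [Conf.toRConf, simLocks, runLocks],
        .takeGrant (hfree (by simp [simLocks, runLocks]))⟩
    | resume =>
      exact ⟨_, by simp [Conf.toRConf, simLocks, runLocks],
        .resume (hfree (by simp [simLocks]))⟩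
  | rel l =>
    obtain ⟨hrel, hpos, rfl, rfl⟩ := h
    cases hrel with
    | dec h =>
      obtain ⟨m, rfl⟩ := exists_bump_of_pos hpos
      exact ⟨_, by simp [Conf.toRConf, simLocks, runLocks, runLocks_bump, count_bump], .dec h⟩
    | ask h => exact ⟨_, by simp [Conf.toRConf, simLocks, runLocks], .ask h⟩
    | grant => exact ⟨_, by simp [Conf.toRConf, simLocks, runLocks], .returnGrant⟩

theorem exists_step_of_checkStep {s : SimState Q} {n : ℕ × ℕ} {r : CheckState}
    {lab : Label Lock} {u : RConf CheckState Empty Lock}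
    (h : checkPDS.RStep (TwoPDS.rfreeLocks (Conf.toRConf ⟨s, n, r⟩)) (r, [], checkLocks r)
      lab u) :
    ∃ y, y.toRConf = ((s, [], simLocks s n), u) ∧ Step M ⟨s, n, r⟩ y := by
  obtain ⟨r', w, f⟩ := u
  cases lab with
  | state => exact h.1.elim
  | push | pop => obtain ⟨⟨⟩, -⟩ := h
  | acq l =>
    obtain ⟨hacq, hfree, rfl, rfl⟩ := h
    replace hfree := checkAvail_iff.1 hfree
    cases hacq with
    | gate => exact ⟨_, by simp [Conf.toRConf, checkLocks], .closeGate (hfree rfl)⟩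
    | grant₁ =>
      exact ⟨_, by simp [Conf.toRConf, checkLocks],
        .collectGrant₁ (hfree (by simp [checkLocks]))⟩
    | grant₂ =>
      exact ⟨_, by rw [Conf.toRConf, update_checkLocks_boot2],
        .collectGrant₂ (hfree (by simp [checkLocks]))⟩
    | claim => exact ⟨_, by simp [Conf.toRConf, checkLocks, idleLocks], .claim (hfree rfl)⟩
    | test =>
      exact ⟨_, by simp [Conf.toRConf, checkLocks, idleLocks],
        .test (hfree (by simp [checkLocks, idleLocks]))⟩
    | reclaim =>
      exact ⟨_, by simp [Conf.toRConf, checkLocks, idleLocks],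
        .reclaim (hfree (by simp [checkLocks]))⟩
  | rel l =>
    obtain ⟨hrel, hpos, rfl, rfl⟩ := h
    cases hrel with
    | gate => exact ⟨_, by simp [Conf.toRConf, checkLocks, idleLocks], .openGate⟩
    | untest => exact ⟨_, by simp [Conf.toRConf, checkLocks, idleLocks], .untest⟩
    | grant => exact ⟨_, by simp [Conf.toRConf, checkLocks, idleLocks], .grant⟩
    | release => exact ⟨_, by simp [Conf.toRConf, checkLocks, idleLocks], .release⟩

theorem exists_step_of_move {x : Conf Q}
    {t : TwoPDS.RConf2 (SimState Q) Empty CheckState Empty Lock}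
    (h : (system M).Move x.toRConf t) : ∃ y, y.toRConf = t ∧ Step M x y := by
  obtain ⟨u, v⟩ := t
  obtain ⟨⟨lab, j⟩, ⟨-, h, rfl⟩ | ⟨-, h, rfl⟩⟩ := h
  · exact exists_step_of_simStep h
  · exact exists_step_of_checkStep h

theorem Invariant.step {x y : Conf Q} (hx : Invariant M x) (h : Step M x y) : Invariant M y := by
  -- Most combinations are excluded by a lock the other thread holds, or keep their clause.
  cases h <;> cases hx <;> first
    | (exfalso; simp_all [simLocks, checkLocks, runLocks, idleLocks]; done)
    | (constructor <;> first | assumption | decide)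
    | skip
  case takeRequest.serveBoot1 i _ h =>
    obtain rfl : i = false := by simpa using h
    exact .serveBoot2
  case start.idleBoot2 => exact .idleRun .refl
  case start.serveBoot2 h => simp at h
  case internal.idleRun hq hr => exact .idleRun (hr.internal hq)
  case inc.idleRun hq hr _ => exact .idleRun (hr.inc hq)
  case dec.idleRun hq hr => exact .idleRun (hr.dec hq)
  case ask.idleRun hq hr => exact .idleAsking (hr.zero hq)
  case takeGrant.checkedAsking k _ hr h =>
    obtain rfl : k = .granting := by simpa using h
    exact .grantingGranted hr
  case resume.serveResuming h => simp at h
  case closeGate.checkerBoot0 s _ h =>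
    cases s <;> simp [simLocks, runLocks] at h
    exact .checkerBoot1
  case claim.idleBoot2 i _ h =>
    cases i
    · exact .serveBoot2
    · simp [simLocks] at h
  case claim.idleAsking i _ j _ h hr =>
    cases i <;> cases j <;> first | exact .claimedAsking hr | simp [simLocks, runLocks] at h
  case claim.idleResuming i _ j _ h hr =>
    cases i <;> cases j <;> first | exact .serveResuming hr | simp [simLocks, runLocks] at h
  case test.claimedAsking h hr =>
    exact .checkedAsking (by decide) (hr (by simpa [simLocks, runLocks] using h))
  case release.checkedAsking hr _ => exact .idleAsking fun _ => hr

theorem Invariant.of_reflTransGen {y : Conf Q} (h : ReflTransGen (Step M) .init y) :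
    Invariant M y := by
  induction h with
  | refl => exact .checkerBoot0
  | tail _ hs ih => exact ih.step hs

theorem Invariant.reaches {q : Q} {n : ℕ × ℕ} (h : Invariant M ⟨.run q, n, .idle⟩) :
    M.Reaches q n := by
  cases h
  assumption

theorem reflTransGen_init_start : ReflTransGen (Step M) .init ⟨.run M.start, (0, 0), .idle⟩ :=
  .head (.closeGate rfl) <| .head (.collectGrant₁ rfl) <| .head (.collectGrant₂ rfl) <|
    .head .openGate <| .head (.takeGate rfl) <| .head (.takeRequest rfl) <| .single (.start rfl)

theorem reflTransGen_zero_test {q q' : Q} {n : ℕ × ℕ} {i : Bool} (hq : (q, q') ∈ M.zTr i)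
    (h0 : count i n = 0) : ReflTransGen (Step M) ⟨.run q, n, .idle⟩ ⟨.run q', n, .idle⟩ := by
  refine .head (.ask hq) <| .head (.claim (i := i) ?_) <| .head (.test ?_) <| .head .untest <|
    .head .grant <| .head (.takeGrant ?_) <| .head .returnGrant <| .head (.reclaim ?_) <|
    .head .release <| .single (.resume ?_) <;>
    simp [simLocks, runLocks, checkLocks, idleLocks, h0]

theorem reflTransGen_running_of_step {x y : Q × ℕ × ℕ} (h : M.Step x y) :
    ReflTransGen (Step M) (.running x) (.running y) := by
  obtain ⟨q, n⟩ := x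
  obtain ⟨q', n'⟩ := y
  rcases M.step_iff.1 h with ⟨hq, rfl⟩ | ⟨i, hq, rfl⟩ | ⟨i, hq, rfl⟩ | ⟨i, hq, h0, rfl⟩
  · exact .single (.internal hq)
  · exact .single (.inc hq fun _ => rfl)
  · exact .single (.dec hq)
  · exact reflTransGen_zero_test hq h0

theorem halts_iff_exists_reflTransGen : M.Halts ↔
    ∃ y, ReflTransGen (Step M) .init y ∧ y.sim = .run M.final ∧ y.chk = .idle := by
  constructor
  · rintro ⟨x, hx, hfin⟩
    refine ⟨.running x, ?_, by simp [Conf.running, hfin], rfl⟩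
    exact reflTransGen_init_start.trans (hx.lift' _ fun _ _ => reflTransGen_running_of_step)
  · rintro ⟨⟨s, n, r⟩, hy, rfl, rfl⟩
    exact ⟨(M.final, n), (Invariant.of_reflTransGen hy).reaches, rfl⟩

theorem halts_iff_rreach : M.Halts ↔ (system M).RReach (.run M.final) .idle := by
  have hsim (t) : ReflTransGen (system M).Move (Conf.init : Conf Q).toRConf t ↔
      ∃ y, ReflTransGen (Step M) .init y ∧ y.toRConf = t :=
    reflTransGen_map_iff Step.move exists_step_of_move
  have hinit : (Conf.init : Conf Q).toRConf = (system M).rinitConf := rfl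
  rw [halts_iff_exists_reflTransGen, TwoPDS.rreach_iff_reflTransGen, ← hinit]
  simp only [hsim, exists_exists_and_eq_and]
  rfl

end LockReduction

/-- For every two-counter machine `M` there are a finite set of
locks with exactly 8 elements, a 2-PDS `CP = (P₁, P₂)` communicating via these
reentrant locks in which both threads have empty stack alphabet (hence trivially
follow contextual reentrant locking and never use their stacks), and control states
`q_f'` of `P₁` and `q∗` of `P₂` such that `M` halts iff `Reach(CP, q_f', q∗)`. -/
theorem tcm_halts_iff_reentrant_reach
    {Q : Type} [Finite Q] (M : TCM Q) :
    ∃ (Locks : Type) (_ : Fintype Locks) (_ : DecidableEq Locks),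
      Fintype.card Locks = 8 ∧
      ∃ (Q₁ Q₂ : Type) (_ : Finite Q₁) (_ : Finite Q₂)
        (CP : TwoPDS Q₁ Empty Q₂ Empty Locks) (qf : Q₁) (qst : Q₂),
        CP.RContextual 0 ∧ CP.RContextual 1 ∧
        (M.Halts ↔ CP.RReach qf qst) := by
  have := Fintype.ofFinite Q
  exact ⟨LockReduction.Lock, inferInstance, inferInstance, rfl, LockReduction.SimState Q,
    LockReduction.CheckState, inferInstance, inferInstance, LockReduction.system M, .run M.final,
    .idle, TwoPDS.rcontextual_of_isEmpty _ 0, TwoPDS.rcontextual_of_isEmpty _ 1,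
    LockReduction.halts_iff_rreach⟩
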